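/- arXiv:1506.07379 — 3 statements merged into one kernel-verified Lean document; each statement's English description precedes it below -/
import Mathlib

section
/- Let f(x) = a_0 x^n + a_1 x^{n-1} + ... + a_n be a real polynomial of degree n and let M be an integer with 2 ≤ M ≤ n. If all the leading coefficients h_0, h_1, ..., h_n of the polynomials f_0, f_1, ..., f_n obtained by applying the generalized Euclidean algorithm with step M to f are positive, then every complex zero z of f satisfies |arg z| > π/M. -/
open Polynomial

/-- The arithmetic part `f_j` of the polynomial with coefficients `a_0,...,a_n`:
`f_j(x) = Σ_{0 ≤ l ≤ n, l ≡ j (mod M)} a_l x^(n-l)`. -/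
noncomputable def geaInit (a : ℕ → ℝ) (n M j : ℕ) : Polynomial ℝ :=
  ∑ l ∈ Finset.range (n + 1), if l % M = j then C (a l) * X ^ (n - l) else 0

/-- The polynomials `f_0, f_1, ..., f_n` of the generalized Euclidean algorithm with step `M`:
`f_i = d_i f_{i+1} + f_{i+M}` where `d_i`, `f_{i+M}` are quotient and remainder of the
division of `f_i` by `f_{i+1}` (with `d_i = 0`, `f_{i+M} = f_i` when `deg f_i < deg f_{i+1}`
or `f_{i+1} = 0`, as Euclidean division of polynomials indeed provides). -/
noncomputable def gea (a : ℕ → ℝ) (n M : ℕ) : ℕ → Polynomial ℝ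
  | i =>
    if _h : i < M then geaInit a n M i
    else if _h2 : 2 ≤ M then
      gea a n M (i - M) % gea a n M (i - M + 1)
    else 0
  termination_by i => i
  decreasing_by all_goals omega

/-!
Positivity of all `h_i` makes every `f_i` nonzero. Division by a polynomial whose exponents lie in
one residue class mod `M` preserves the residue class of the exponents of the dividend, so `f_i`
only has exponents `≡ n - i`, and comparing degrees along `deg f_{i+M} < deg f_{i+1}` gives
`deg f_i = n - i`. Hence every quotient is linear: `f_i = c_i X f_{i+1} + f_{i+M}` with
`c_i = h_i / h_{i+1} > 0`, and `f_{n-k} = h_{n-k} X^k` for `k < M`.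

Let `w = |w| e^{iθ}` with `0 ≤ θ ≤ π / M` and `v_i = f_i(w)`, so `v_i = c_i w v_{i+1} + v_{i+M}`.
Going down from the tail, every window `v_s, …, v_{s+M-1}` has `v_{s+j}` on the ray of angle
`γ_j - jθ` with `γ` nondecreasing and `γ_{M-1} ≤ γ_0 + Mθ`: the new value `v_s` is the sum of two
vectors at most `Mθ ≤ π` apart, so it lies on a ray between them. At `s = 0` all angles lie in an
interval of length `(M - 1)θ < π`, so `f(w) = v_0 + ⋯ + v_{M-1} ≠ 0`. Roots with negative
argument are handled by conjugation.
-/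

open Complex ComplexConjugate

theorem Complex.abs_arg_le_of_norm_mul_cos_le {u : ℂ} {h : ℝ} (h0 : 0 ≤ h)
    (hu : ‖u‖ * Real.cos h ≤ u.re) : |u.arg| ≤ h := by
  by_contra! hlt
  have hu0 : u ≠ 0 := by
    rintro rfl
    simp only [arg_zero, abs_zero] at hlt
    linarith
  have hcos : Real.cos |u.arg| < Real.cos h :=
    Real.cos_lt_cos_of_nonneg_of_le_pi h0 (abs_arg_le_pi u) hlt
  rw [Real.cos_abs] at hcos
  have := mul_lt_mul_of_pos_left hcos (norm_pos_iff.2 hu0)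
  rw [norm_mul_cos_arg] at this
  linarith

def OnRay (x : ℂ) (t : ℝ) : Prop :=
  x = ‖x‖ * exp (t * I)

namespace OnRay

variable {x y : ℂ} {s t : ℝ}

theorem zero (t : ℝ) : OnRay 0 t := by
  simp [OnRay]

theorem of_arg (x : ℂ) : OnRay x x.arg :=
  (norm_mul_exp_arg_mul_I x).symm

theorem ofReal {c : ℝ} (hc : 0 ≤ c) : OnRay c 0 := by
  simp [OnRay, abs_of_nonneg hc]

theorem exp_mul_I (t : ℝ) : OnRay (exp (t * I)) t := by
  simp [OnRay, norm_exp_ofReal_mul_I]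

theorem mul (hx : OnRay x s) (hy : OnRay y t) : OnRay (x * y) (s + t) := by
  unfold OnRay at *
  conv_lhs => rw [hx, hy]
  rw [norm_mul]
  push_cast
  rw [add_mul, exp_add]
  ring

theorem pow (hx : OnRay x t) : ∀ k : ℕ, OnRay (x ^ k) (k * t)
  | 0 => by simpa using exp_mul_I 0
  | k + 1 => by
    rw [pow_succ, Nat.cast_succ, add_one_mul]
    exact (hx.pow k).mul hx

theorem re_mul_exp (hx : OnRay x t) (φ : ℝ) :
    (x * exp (φ * I)).re = ‖x‖ * Real.cos (t + φ) := by
  rw [hx.mul (exp_mul_I φ), norm_mul, norm_exp_ofReal_mul_I, mul_one, re_ofReal_mul,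
    exp_ofReal_mul_I_re]

theorem add {α β : ℝ} (hx : OnRay x α) (hy : OnRay y β) (hαβ : α ≤ β)
    (hβα : β ≤ α + Real.pi) : ∃ δ ∈ Set.Icc α β, OnRay (x + y) δ := by
  by_cases h0 : x + y = 0
  · exact ⟨α, ⟨le_rfl, hαβ⟩, h0 ▸ zero α⟩
  set m := (α + β) / 2 with hm
  set u := (x + y) * exp ((-m : ℝ) * I)
  have hre : ‖u‖ * Real.cos ((β - α) / 2) ≤ u.re := by
    have hx' : α + -m = -((β - α) / 2) := by ring
    have hy' : β + -m = (β - α) / 2 := by ring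
    have hcos : 0 ≤ Real.cos ((β - α) / 2) :=
      Real.cos_nonneg_of_mem_Icc ⟨by linarith [Real.pi_pos], by linarith⟩
    have hnorm : ‖u‖ = ‖x + y‖ := by rw [norm_mul, norm_exp_ofReal_mul_I, mul_one]
    rw [hnorm]
    simp only [u, add_mul, add_re, hx.re_mul_exp, hy.re_mul_exp, hx', hy', Real.cos_neg]
    nlinarith [norm_add_le x y]
  have harg := abs_arg_le_of_norm_mul_cos_le (by linarith) hre
  refine ⟨u.arg + m, ⟨by linarith [(abs_le.1 harg).1], by linarith [(abs_le.1 harg).2]⟩, ?_⟩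
  have hxy : x + y = u * exp (m * I) := by
    rw [mul_assoc, ← exp_add, ← add_mul, ofReal_neg, neg_add_cancel, zero_mul, exp_zero, mul_one]
  rw [hxy]
  exact (of_arg u).mul (exp_mul_I m)

end OnRay

theorem sum_ne_zero_of_onRay {ι : Type*} {s : Finset ι} {x : ι → ℂ} {β : ι → ℝ} {φ : ℝ}
    (hx : ∀ i ∈ s, OnRay (x i) (β i)) (hβ : ∀ i ∈ s, |β i - φ| < Real.pi / 2)
    (hne : ∃ i ∈ s, x i ≠ 0) : ∑ i ∈ s, x i ≠ 0 := by
  have hcos : ∀ i ∈ s, 0 < Real.cos (β i + -φ) := fun i hi =>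
    Real.cos_pos_of_mem_Ioo ⟨by linarith [(abs_lt.1 (hβ i hi)).1],
      by linarith [(abs_lt.1 (hβ i hi)).2]⟩
  have hre : 0 < (∑ i ∈ s, x i * exp ((-φ : ℝ) * I)).re := by
    rw [re_sum]
    obtain ⟨i, hi, hxi⟩ := hne
    refine Finset.sum_pos' (fun j hj => ?_) ⟨i, hi, ?_⟩
    · rw [(hx j hj).re_mul_exp]
      exact mul_nonneg (norm_nonneg _) (hcos j hj).le
    · rw [(hx i hi).re_mul_exp]
      exact mul_pos (norm_pos_iff.2 hxi) (hcos i hi)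
  intro hsum
  rw [← Finset.sum_mul, hsum, zero_mul, zero_re] at hre
  exact lt_irrefl 0 hre

-- `γ j` is the angle of `v (s + j) * w ^ j` when `w` lies on the ray of angle `θ`.
def RayWindow (M : ℕ) (θ : ℝ) (v : ℕ → ℂ) (s : ℕ) : Prop :=
  ∃ γ : ℕ → ℝ, Monotone γ ∧ γ (M - 1) ≤ γ 0 + M * θ ∧
    ∀ j < M, OnRay (v (s + j)) (γ j - j * θ)

section RayWindow

variable {M : ℕ} {θ : ℝ} {w : ℂ} {v : ℕ → ℂ} {s : ℕ}

theorem rayWindow_of_eq_mul_pow {h : ℕ → ℝ} (hθ : 0 ≤ θ) (hw : OnRay w θ)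
    (hh : ∀ j < M, 0 ≤ h j) (hv : ∀ j < M, v (s + j) = h j * w ^ (M - 1 - j)) :
    RayWindow M θ v s := by
  refine ⟨fun _ => (M - 1 : ℕ) * θ, monotone_const, by simp; positivity, fun j hj => ?_⟩
  rw [hv j hj]
  convert (OnRay.ofReal (hh j hj)).mul (hw.pow (M - 1 - j)) using 1
  rw [Nat.cast_sub (by omega : j ≤ M - 1)]
  ring

theorem RayWindow.of_succ {c : ℝ} (hM : 0 < M) (hMθ : M * θ ≤ Real.pi) (hw : OnRay w θ)
    (hc : 0 ≤ c) (hrec : v s = c * w * v (s + 1) + v (s + M)) (hwin : RayWindow M θ v (s + 1)) :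
    RayWindow M θ v s := by
  obtain ⟨γ, hmono, hspread, hray⟩ := hwin
  have hM1 : ((M - 1 : ℕ) : ℝ) = M - 1 := by rw [Nat.cast_sub hM, Nat.cast_one]
  have hfirst : OnRay (c * w * v (s + 1)) (γ 0 + θ) := by
    convert ((OnRay.ofReal hc).mul hw).mul (by simpa using hray 0 hM) using 1
    ring
  have hlast : OnRay (v (s + M)) (γ (M - 1) - (M - 1 : ℕ) * θ) := by
    simpa [show s + 1 + (M - 1) = s + M by omega] using hray (M - 1) (by omega)
  have hγ : γ 0 ≤ γ (M - 1) := hmono (Nat.zero_le _)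
  obtain ⟨δ, ⟨hαδ, hδβ⟩, hδ⟩ := hlast.add hfirst (by rw [hM1]; linarith)
    (by rw [hM1]; linarith)
  set γ' : ℕ → ℝ := fun | 0 => δ | j + 1 => γ j + θ
  have hshift : ∀ j, γ' j ≤ γ j + θ
    | 0 => hδβ
    | j + 1 => by simp only [γ']; linarith [hmono j.le_succ]
  refine ⟨γ', monotone_nat_of_le_succ hshift, ?_, ?_⟩
  · rw [hM1] at hαδ
    linarith [hshift (M - 1)]
  · rintro (_ | j) hj
    · simpa [hrec, add_comm] using hδ
    · simpa [γ', show s + (j + 1) = s + 1 + j by omega, add_mul] using hray j (by omega)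

theorem exists_ne_zero_window_of_succ {x : ℂ} (hM : 2 ≤ M)
    (hrec : v s = x * v (s + 1) + v (s + M))
    (h : ∃ j < M, v (s + 1 + j) ≠ 0) : ∃ j < M, v (s + j) ≠ 0 := by
  by_cases h1 : v (s + 1) = 0
  · obtain ⟨j, hj, hvj⟩ := h
    by_cases hjM : j + 1 < M
    · exact ⟨j + 1, hjM, by rwa [← add_assoc, add_right_comm]⟩
    · refine ⟨0, by omega, ?_⟩
      rw [add_zero, hrec, h1, mul_zero, zero_add]
      rwa [show s + 1 + j = s + M by omega] at hvj
  · exact ⟨1, by omega, h1⟩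

theorem RayWindow.sum_ne_zero (hθ : 0 ≤ θ) (hMθ : M * θ ≤ Real.pi) (hwin : RayWindow M θ v 0)
    (hne : ∃ j < M, v j ≠ 0) : ∑ j ∈ Finset.range M, v j ≠ 0 := by
  obtain ⟨γ, hmono, hspread, hray⟩ := hwin
  obtain ⟨j₀, hj₀, hvj₀⟩ := hne
  set β : ℕ → ℝ := fun j => γ j - j * θ
  obtain ⟨b, hb, hbmin⟩ :=
    (Finset.range M).exists_min_image β ⟨j₀, Finset.mem_range.2 hj₀⟩
  rw [Finset.mem_range] at hb
  have hwidth : ∀ a < M, β a ≤ β b + (M - 1) * θ := by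
    intro a ha
    have hbM : (b : ℝ) + 1 ≤ M := by exact_mod_cast hb
    rcases le_or_gt a b with hab | hba
    · have hγ := hmono hab
      have := mul_le_mul_of_nonneg_right (show (b : ℝ) - a ≤ M - 1 by
        linarith [(Nat.cast_nonneg a : (0 : ℝ) ≤ a)]) hθ
      simp only [β]
      linarith
    · have hγ := hmono (show a ≤ M - 1 by omega)
      have hγ0 := hmono (Nat.zero_le b)
      have := mul_le_mul_of_nonneg_right (show (b : ℝ) + 1 ≤ a by exact_mod_cast hba) hθ
      simp only [β]
      linarith
  have hπ : (M - 1) * θ < Real.pi := by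
    rcases hθ.eq_or_lt with rfl | hθ
    · simpa using Real.pi_pos
    · linarith
  refine sum_ne_zero_of_onRay (β := β) (φ := β b + (M - 1) * θ / 2)
    (fun j hj => by simpa using hray j (Finset.mem_range.1 hj)) (fun j hj => ?_) ?_
  · have h1 := hbmin j hj
    have h2 := hwidth j (Finset.mem_range.1 hj)
    rw [abs_lt]
    constructor <;> linarith
  · exact ⟨j₀, Finset.mem_range.2 hj₀, hvj₀⟩

theorem sum_ne_zero_of_recurrence {c h : ℕ → ℝ} (hM : 2 ≤ M) (hθ : 0 ≤ θ)
    (hMθ : M * θ ≤ Real.pi) (hw : OnRay w θ)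
    (hrec : ∀ i < s, v i = c i * w * v (i + 1) + v (i + M)) (hc : ∀ i < s, 0 ≤ c i)
    (hv : ∀ j < M, v (s + j) = h j * w ^ (M - 1 - j)) (hh : ∀ j < M, 0 < h j) :
    ∑ j ∈ Finset.range M, v j ≠ 0 := by
  have hwin : ∀ i ≤ s, RayWindow M θ v i ∧ ∃ j < M, v (i + j) ≠ 0 := by
    intro i hi
    induction hi using Nat.decreasingInduction with
    | self =>
      refine ⟨rayWindow_of_eq_mul_pow hθ hw (fun j hj => (hh j hj).le) hv, M - 1, by omega, ?_⟩
      rw [hv _ (by omega), Nat.sub_self, pow_zero, mul_one]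
      exact_mod_cast (hh _ (by omega)).ne'
    | of_succ i hi ih =>
      exact ⟨ih.1.of_succ (by omega) hMθ hw (hc i hi) (hrec i hi),
        exists_ne_zero_window_of_succ hM (hrec i hi) ih.2⟩
  obtain ⟨hwin₀, hne⟩ := hwin 0 (Nat.zero_le s)
  exact hwin₀.sum_ne_zero hθ hMθ (by simpa using hne)

end RayWindow

def SupportInClass {R : Type*} [Semiring R] (M : ℕ) (r : ZMod M) (p : R[X]) : Prop :=
  ∀ e : ℕ, (e : ZMod M) ≠ r → p.coeff e = 0

namespace SupportInClass

variable {R : Type*} {M : ℕ} {r s : ZMod M}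

section Semiring

variable [Semiring R] {p q : R[X]}

theorem zero (r : ZMod M) : SupportInClass M r (0 : R[X]) :=
  fun _ _ => coeff_zero _

theorem C_mul_X_pow (a : R) (k : ℕ) : SupportInClass M k (C a * X ^ k) := by
  intro e he
  rw [coeff_C_mul_X_pow, if_neg (by rintro rfl; exact he rfl)]

theorem sum {ι : Type*} {t : Finset ι} {p : ι → R[X]} (h : ∀ i ∈ t, SupportInClass M r (p i)) :
    SupportInClass M r (∑ i ∈ t, p i) := fun e he => by
  rw [finsetSum_coeff]
  exact Finset.sum_eq_zero fun i hi => h i hi e he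

theorem mul (hp : SupportInClass M r p) (hq : SupportInClass M s q) :
    SupportInClass M (r + s) (p * q) := fun e he => by
  rw [coeff_mul]
  refine Finset.sum_eq_zero fun x hx => ?_
  rw [Finset.HasAntidiagonal.mem_antidiagonal] at hx
  by_cases hr : (x.1 : ZMod M) = r
  · refine mul_eq_zero_of_right _ (hq _ fun hs => he ?_)
    rw [← hx, Nat.cast_add, hr, hs]
  · exact mul_eq_zero_of_left (hp _ hr) _

theorem cast_eq {e : ℕ} (hp : SupportInClass M r p) (he : p.coeff e ≠ 0) : (e : ZMod M) = r :=
  not_not.1 fun h => he (hp e h)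

theorem modEq {k e : ℕ} (hp : SupportInClass M k p) (he : p.coeff e ≠ 0) : e ≡ k [MOD M] :=
  (ZMod.natCast_eq_natCast_iff _ _ _).1 (hp.cast_eq he)

end Semiring

theorem sub [Ring R] {p q : R[X]} (hp : SupportInClass M r p) (hq : SupportInClass M r q) :
    SupportInClass M r (p - q) := fun e he => by
  rw [coeff_sub, hp e he, hq e he, sub_zero]

theorem mod {K : Type*} [Field K] {p q : K[X]} (hp : SupportInClass M r p)
    (hq : SupportInClass M s q) : SupportInClass M r (p % q) := by
  rcases eq_or_ne q 0 with rfl | hq0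
  · rwa [EuclideanDomain.mod_zero]
  induction hd : p.natDegree using Nat.strong_induction_on generalizing p with
  | _ d ih =>
  by_cases hlt : p.degree < q.degree
  · rwa [(mod_eq_self_iff hq0).2 hlt]
  have hp0 : p ≠ 0 := by
    rintro rfl
    exact hlt (by simpa [bot_lt_iff_ne_bot] using hq0)
  have hqp : q.natDegree ≤ p.natDegree := natDegree_le_natDegree (not_lt.1 hlt)
  have hc : p.leadingCoeff / q.leadingCoeff ≠ 0 := by simp [hp0, hq0]
  set t := C (p.leadingCoeff / q.leadingCoeff) * X ^ (p.natDegree - q.natDegree) * q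
  have ht : SupportInClass M r t := by
    convert (C_mul_X_pow (M := M) _ _).mul hq
    rw [← hp.cast_eq (p.coeff_natDegree ▸ leadingCoeff_ne_zero.2 hp0),
      ← hq.cast_eq (q.coeff_natDegree ▸ leadingCoeff_ne_zero.2 hq0), Nat.cast_sub hqp,
      sub_add_cancel]
  have hdeg : t.degree = p.degree := by
    rw [degree_mul, degree_C_mul_X_pow _ hc, degree_eq_natDegree hq0, degree_eq_natDegree hp0]
    norm_cast
    omega
  have hlc : t.leadingCoeff = p.leadingCoeff := by
    rw [leadingCoeff_mul, leadingCoeff_C_mul_X_pow, div_mul_cancel₀ _ (leadingCoeff_ne_zero.2 hq0)]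
  rw [← mod_eq_of_dvd_sub (p₁ := p - t) (by simp [t])]
  rcases eq_or_ne (p - t) 0 with h0 | h0
  · rw [h0, EuclideanDomain.zero_mod]
    exact zero r
  exact ih _ (hd ▸ natDegree_lt_natDegree h0 (degree_sub_lt_left hdeg.symm hp0 hlc.symm))
    (hp.sub ht) rfl

end SupportInClass

section EuclideanAlgorithm

variable {a : ℕ → ℝ} {n M : ℕ}

theorem gea_of_lt {i : ℕ} (hi : i < M) : gea a n M i = geaInit a n M i := by
  rw [gea]
  simp [hi]

theorem gea_add (hM : 2 ≤ M) (i : ℕ) :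
    gea a n M (i + M) = gea a n M i % gea a n M (i + 1) := by
  rw [gea]
  simp [hM]

theorem supportInClass_geaInit (j : ℕ) :
    SupportInClass M ((n : ZMod M) - j) (geaInit a n M j) := by
  refine SupportInClass.sum fun l hl => ?_
  split_ifs with hlj
  · convert SupportInClass.C_mul_X_pow (M := M) (a l) (n - l)
    rw [Nat.cast_sub (Nat.lt_succ_iff.1 (Finset.mem_range.1 hl)), ← hlj, ZMod.natCast_mod]
  · exact SupportInClass.zero _

theorem supportInClass_gea (hM : 2 ≤ M) (i : ℕ) :
    SupportInClass M ((n : ZMod M) - i) (gea a n M i) := by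
  induction i using Nat.strong_induction_on with
  | _ i ih =>
  rcases lt_or_ge i M with hi | hi
  · rw [gea_of_lt hi]
    exact supportInClass_geaInit i
  · obtain ⟨j, rfl⟩ := Nat.exists_eq_add_of_le' hi
    have hclass : (n : ZMod M) - (j + M : ℕ) = n - j := by
      rw [Nat.cast_add, ZMod.natCast_self, add_zero]
    rw [gea_add hM, hclass]
    exact (ih j (by omega)).mod (ih (j + 1) (by omega))

theorem supportInClass_gea_of_le (hM : 2 ≤ M) {i : ℕ} (hi : i ≤ n) :
    SupportInClass M (n - i : ℕ) (gea a n M i) := by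
  rw [Nat.cast_sub hi]
  exact supportInClass_gea hM i

theorem gea_coeff_modEq (hM : 2 ≤ M) {i e : ℕ} (hi : i ≤ n) (he : (gea a n M i).coeff e ≠ 0) :
    e ≡ n - i [MOD M] :=
  (supportInClass_gea_of_le hM hi).modEq he

theorem gea_natDegree_modEq (hM : 2 ≤ M) (hne : ∀ i ≤ n, gea a n M i ≠ 0) {i : ℕ} (hi : i ≤ n) :
    (gea a n M i).natDegree ≡ n - i [MOD M] :=
  gea_coeff_modEq hM hi (leadingCoeff_ne_zero.2 (hne i hi))

theorem gea_natDegree_add_lt (hM : 2 ≤ M) (hne : ∀ i ≤ n, gea a n M i ≠ 0) {i : ℕ}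
    (hi : i + M ≤ n) : (gea a n M (i + M)).natDegree < (gea a n M (i + 1)).natDegree := by
  refine natDegree_lt_natDegree (hne _ hi) ?_
  rw [gea_add hM]
  exact degree_mod_lt _ (hne _ (by omega))

theorem natDegree_gea_le (hM : 2 ≤ M) (hne : ∀ i ≤ n, gea a n M i ≠ 0) {i : ℕ} (hi : i ≤ n) :
    (gea a n M i).natDegree ≤ n - i := by
  refine (gea_natDegree_modEq hM hne hi).le_of_lt_add ?_
  rcases lt_or_ge i M with hiM | hiM
  · rw [gea_of_lt hiM, geaInit]
    refine (natDegree_sum_le_of_forall_le (n := n) _ _ fun l _ => ?_).trans_lt (by omega)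
    split_ifs
    · exact (natDegree_C_mul_X_pow_le _ _).trans (Nat.sub_le n l)
    · simp
  · obtain ⟨j, rfl⟩ := Nat.exists_eq_add_of_le' hiM
    have := gea_natDegree_add_lt hM hne hi
    have := natDegree_gea_le hM hne (i := j + 1) (by omega)
    omega
termination_by i

theorem le_natDegree_gea (hM : 2 ≤ M) (ha0 : a 0 ≠ 0) (hne : ∀ i ≤ n, gea a n M i ≠ 0) {i : ℕ}
    (hi : i ≤ n) : n - i ≤ (gea a n M i).natDegree := by
  rcases Nat.eq_zero_or_pos i with rfl | hi0
  · refine le_natDegree_of_ne_zero ?_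
    rw [gea_of_lt (by omega), geaInit, finsetSum_coeff, Finset.sum_eq_single 0]
    · simpa using ha0
    · intro l hl hl0
      rw [Finset.mem_range] at hl
      split_ifs
      · rw [coeff_C_mul_X_pow, if_neg (by omega)]
      · exact coeff_zero n
    · simp
  refine (gea_natDegree_modEq hM hne hi).symm.le_of_lt_add ?_
  rcases lt_or_ge n (i - 1 + M) with hiM | hiM
  · omega
  · have := gea_natDegree_add_lt hM hne hiM
    have := le_natDegree_gea hM ha0 hne hiM
    rw [Nat.sub_add_cancel hi0] at *
    omega
termination_by n - i

theorem natDegree_gea (hM : 2 ≤ M) (ha0 : a 0 ≠ 0) (hne : ∀ i ≤ n, gea a n M i ≠ 0) {i : ℕ}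
    (hi : i ≤ n) : (gea a n M i).natDegree = n - i :=
  (natDegree_gea_le hM hne hi).antisymm (le_natDegree_gea hM ha0 hne hi)

theorem gea_eq_C_mul_X_pow (hM : 2 ≤ M) (ha0 : a 0 ≠ 0) (hne : ∀ i ≤ n, gea a n M i ≠ 0)
    {i : ℕ} (hi : i ≤ n) (hiM : n < i + M) :
    gea a n M i = C (gea a n M i).leadingCoeff * X ^ (n - i) := by
  ext e
  rw [coeff_C_mul_X_pow]
  split_ifs with he
  · rw [he, ← natDegree_gea hM ha0 hne hi]
    rfl
  · by_contra hce
    have h1 := le_natDegree_of_ne_zero hce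
    rw [natDegree_gea hM ha0 hne hi] at h1
    have h2 := (gea_coeff_modEq hM hi hce).symm.le_of_lt_add (by omega)
    exact he (by omega)

theorem gea_eq_C_mul_X_mul_add (hM : 2 ≤ M) (ha0 : a 0 ≠ 0) (hne : ∀ i ≤ n, gea a n M i ≠ 0)
    {i : ℕ} (hi : i + M ≤ n) :
    gea a n M i = C ((gea a n M i).leadingCoeff / (gea a n M (i + 1)).leadingCoeff) * X *
      gea a n M (i + 1) + gea a n M (i + M) := by
  set p := gea a n M i
  set q := gea a n M (i + 1)
  set t := C (p.leadingCoeff / q.leadingCoeff) * X * q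
  have hp0 : p ≠ 0 := hne i (by omega)
  have hq0 : q ≠ 0 := hne (i + 1) (by omega)
  have hdp : p.natDegree = n - i := natDegree_gea hM ha0 hne (by omega)
  have hdq : q.natDegree = n - (i + 1) := natDegree_gea hM ha0 hne (by omega)
  have hc : p.leadingCoeff / q.leadingCoeff ≠ 0 := by simp [hp0, hq0]
  have hdeg : t.degree = p.degree := by
    rw [degree_mul, degree_C_mul_X hc, degree_eq_natDegree hq0, degree_eq_natDegree hp0, hdp, hdq]
    norm_cast
    omega
  have hlc : t.leadingCoeff = p.leadingCoeff := by
    rw [leadingCoeff_mul, leadingCoeff_mul, leadingCoeff_C, leadingCoeff_X, mul_one,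
      div_mul_cancel₀ _ (leadingCoeff_ne_zero.2 hq0)]
  have hclass : SupportInClass M (n - i : ℕ) (p - t) := by
    have ht := (SupportInClass.C_mul_X_pow (M := M) (p.leadingCoeff / q.leadingCoeff) 1).mul
      (supportInClass_gea_of_le (a := a) (n := n) hM (i := i + 1) (by omega))
    have hcl : ((1 : ℕ) : ZMod M) + (n - (i + 1) : ℕ) = (n - i : ℕ) := by
      rw [← Nat.cast_add]
      congr 1
      omega
    rw [pow_one, hcl] at ht
    exact (supportInClass_gea_of_le hM (by omega)).sub ht
  have hlt : (p - t).degree < q.degree := by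
    rcases eq_or_ne (p - t) 0 with h0 | h0
    · simpa [h0, bot_lt_iff_ne_bot] using hq0
    have h1 : (p - t).natDegree < n - i :=
      hdp ▸ natDegree_lt_natDegree h0 (degree_sub_lt_left hdeg.symm hp0 hlc.symm)
    have h2 := (hclass.modEq (leadingCoeff_ne_zero.2 h0)).add_le_of_lt h1
    rw [degree_eq_natDegree h0, degree_eq_natDegree hq0]
    exact_mod_cast (by omega : (p - t).natDegree < q.natDegree)
  have hdvd : q ∣ p - t - p := by
    rw [sub_sub_cancel_left]
    exact (dvd_mul_left q _).neg_right
  rw [gea_add hM, ← mod_eq_of_dvd_sub hdvd, (mod_eq_self_iff hq0).2 hlt]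
  ring

theorem sum_geaInit (hM : 0 < M) :
    ∑ j ∈ Finset.range M, geaInit a n M j = ∑ l ∈ Finset.range (n + 1), C (a l) * X ^ (n - l) := by
  simp only [geaInit]
  rw [Finset.sum_comm]
  refine Finset.sum_congr rfl fun l _ => ?_
  simp [Finset.sum_ite_eq, Nat.mod_lt l hM]

end EuclideanAlgorithm

theorem sum_mul_pow_ne_zero_of_arg_le {a : ℕ → ℝ} {n M : ℕ} (hM : 2 ≤ M) (hMn : M ≤ n)
    (ha0 : a 0 ≠ 0) (hpos : ∀ i ≤ n, 0 < (gea a n M i).leadingCoeff) {w : ℂ} (hw0 : 0 ≤ w.arg)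
    (hwM : M * w.arg ≤ Real.pi) : ∑ l ∈ Finset.range (n + 1), (a l : ℂ) * w ^ (n - l) ≠ 0 := by
  have hne : ∀ i ≤ n, gea a n M i ≠ 0 := fun i hi => leadingCoeff_ne_zero.1 (hpos i hi).ne'
  have hsum : ∑ l ∈ Finset.range (n + 1), (a l : ℂ) * w ^ (n - l) =
      ∑ j ∈ Finset.range M, aeval w (gea a n M j) := by
    rw [Finset.sum_congr rfl fun j hj => congrArg (aeval w) (gea_of_lt (Finset.mem_range.1 hj)),
      ← map_sum, sum_geaInit (by omega)]
    simp [map_sum]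
  rw [hsum]
  refine sum_ne_zero_of_recurrence (s := n + 1 - M)
    (c := fun i => (gea a n M i).leadingCoeff / (gea a n M (i + 1)).leadingCoeff)
    (h := fun j => (gea a n M (n + 1 - M + j)).leadingCoeff) hM hw0 hwM (OnRay.of_arg w)
    (fun i hi => ?_) (fun i hi => div_nonneg (hpos _ (by omega)).le (hpos _ (by omega)).le)
    (fun j hj => ?_) (fun j hj => hpos _ (by omega))
  · conv_lhs => rw [gea_eq_C_mul_X_mul_add hM ha0 hne (by omega)]
    simp
  · conv_lhs => rw [gea_eq_C_mul_X_pow hM ha0 hne (by omega) (by omega)]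
    simp [show n - (n + 1 - M + j) = M - 1 - j by omega]

/-- If all the leading coefficients `h_0, ..., h_n` of the polynomials `f_0, ..., f_n`
produced by the generalized Euclidean algorithm with step `M` (2 ≤ M ≤ n) are positive,
then every complex zero `z` of `f` satisfies `|arg z| > π/M`. -/
theorem gen_euclid_pos_leading_coeffs_forbidden_sector
    (n M : ℕ) (a : ℕ → ℝ) (ha0 : a 0 ≠ 0) (hM : 2 ≤ M) (hMn : M ≤ n)
    (hpos : ∀ i ≤ n, 0 < (gea a n M i).leadingCoeff)
    (z : ℂ) (hroot : (∑ l ∈ Finset.range (n + 1), (a l : ℂ) * z ^ (n - l)) = 0) :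
    Real.pi / M < |Complex.arg z| := by
  by_contra! hsector
  obtain ⟨w, hw, hwarg⟩ : ∃ w, (w = z ∨ w = conj z) ∧ w.arg = |z.arg| := by
    rcases le_or_gt 0 z.arg with hz | hz
    · exact ⟨z, .inl rfl, (abs_of_nonneg hz).symm⟩
    · refine ⟨conj z, .inr rfl, ?_⟩
      rw [arg_conj, if_neg (by linarith [Real.pi_pos]), abs_of_neg hz]
  refine sum_mul_pow_ne_zero_of_arg_le hM hMn ha0 hpos (hwarg ▸ abs_nonneg _)
    (hwarg ▸ (le_div_iff₀' (by positivity)).1 hsector) ?_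
  rcases hw with rfl | rfl
  · exact hroot
  · simpa [map_sum] using congrArg conj hroot
end

section
/- Let f be a real polynomial of degree n ≥ 2, let 2 ≤ M ≤ n, and let f_0, ..., f_n and d_0, ..., d_{n-M} be produced by the generalized Euclidean algorithm with step M applied to f. Then: (A) every nonzero f_i is arithmetic with difference M; (B) if f_i and f_{i+M} are both nonzero, then every exponent of a nonzero monomial of f_i is congruent modulo M to every exponent of a nonzero monomial of f_{i+M}; (C) for every 0 ≤ i ≤ n−M, either d_i = 0 or d_i is arithmetic with difference M and, for any exponents e, e', e'' of nonzero monomials of d_i, f_{i+1}, f_i respectively, e + e' ≡ e'' (mod M); (D) if f_i and f_{i+1} are both nonzero (0 ≤ i ≤ n−1), then deg f_i ≠ deg f_{i+1}. -/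
/-!
Every exponent `e` of `f_i` satisfies `e + i ≡ n (mod M)`. This holds for the initial parts
`f_0, …, f_{M-1}` by construction, and it propagates along `f_{i+M} = f_i % f_{i+1}` because
Euclidean division respects residues of exponents: if all exponents of `p` are `≡ r` and all
exponents of `q` are `≡ s`, every step of long division subtracts from `p` the product of `q`
with a monomial of exponent `≡ r - s`, so the remainder has exponents `≡ r` and the quotient
exponents `≡ r - s`. Statements (A)–(C) are read off from this invariant, and (D) holds because
the leading exponents of `f_i` and `f_{i+1}` lie in different residue classes.
-/

open Polynomial

/-- A real polynomial is arithmetic with difference `M` if the exponents of any two of its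
nonzero monomials are congruent modulo `M`. -/
def IsArithmetic (M : ℕ) (p : Polynomial ℝ) : Prop :=
  ∀ e ∈ p.support, ∀ e' ∈ p.support, e % M = e' % M

namespace Polynomial

variable {K : Type*} {M : ℕ}

-- Residues live in `ZMod M` so that they can be subtracted.
def HasExponentResidue [Semiring K] (r : ZMod M) (p : K[X]) : Prop :=
  ∀ e ∈ p.support, (e : ZMod M) = r

namespace HasExponentResidue

section Semiring

variable [Semiring K] {r s : ZMod M} {p q : K[X]}

theorem zero : HasExponentResidue r (0 : K[X]) := by
  simp [HasExponentResidue]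

theorem natDegree_cast (hp : HasExponentResidue r p) (hp0 : p ≠ 0) :
    (p.natDegree : ZMod M) = r :=
  hp _ (natDegree_mem_support_of_nonzero hp0)

theorem add (hp : HasExponentResidue r p) (hq : HasExponentResidue r q) :
    HasExponentResidue r (p + q) := fun e he ↦ by
  rcases Finset.mem_union.1 (support_add he) with he | he
  exacts [hp e he, hq e he]

theorem mul (hp : HasExponentResidue r p) (hq : HasExponentResidue s q) :
    HasExponentResidue (r + s) (p * q) := fun e he ↦ by
  rw [mem_support_iff, coeff_mul] at he
  obtain ⟨⟨i, j⟩, hij, hne⟩ := Finset.exists_ne_zero_of_sum_ne_zero he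
  rw [← Finset.HasAntidiagonal.mem_antidiagonal.1 hij, Nat.cast_add,
    hp i (mem_support_iff.2 (left_ne_zero_of_mul hne)),
    hq j (mem_support_iff.2 (right_ne_zero_of_mul hne))]

theorem C_mul_X_pow (c : K) (k : ℕ) : HasExponentResidue (k : ZMod M) (C c * X ^ k) :=
  fun e he ↦ by rw [Finset.mem_singleton.1 (support_C_mul_X_pow_subset k c he)]

end Semiring

theorem sub [Ring K] {r : ZMod M} {p q : K[X]} (hp : HasExponentResidue r p)
    (hq : HasExponentResidue r q) : HasExponentResidue r (p - q) := by
  rw [sub_eq_add_neg]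
  exact hp.add fun e he ↦ hq e (by rwa [support_neg] at he)

variable [Field K] {r s : ZMod M} {q : K[X]}

theorem mod_and_div {p : K[X]} (hp : HasExponentResidue r p) (hq : HasExponentResidue s q) :
    HasExponentResidue r (p % q) ∧ HasExponentResidue (r - s) (p / q) := by
  rcases eq_or_ne q 0 with rfl | hq0
  · simpa [EuclideanDomain.mod_zero, EuclideanDomain.div_zero] using ⟨hp, zero⟩
  by_cases hdeg : p.degree < q.degree
  · rw [(mod_eq_self_iff hq0).2 hdeg, (Polynomial.div_eq_zero_iff hq0).2 hdeg]
    exact ⟨hp, zero⟩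
  have hp0 : p ≠ 0 := by rintro rfl; exact hdeg (by simpa [bot_lt_iff_ne_bot] using hq0)
  have hqp : q.natDegree ≤ p.natDegree := natDegree_le_natDegree (not_lt.1 hdeg)
  -- the first step of long division: `p = q * t + p'` with `deg p' < deg p`
  set t := C (p.leadingCoeff / q.leadingCoeff) * X ^ (p.natDegree - q.natDegree)
  set p' := p - q * t
  have ht : HasExponentResidue (r - s) t := by
    have := C_mul_X_pow (M := M) (p.leadingCoeff / q.leadingCoeff) (p.natDegree - q.natDegree)
    rwa [Nat.cast_sub hqp, hp.natDegree_cast hp0, hq.natDegree_cast hq0] at this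
  have hp' : HasExponentResidue r p' := hp.sub (by simpa using hq.mul ht)
  have hlt : p'.degree < p.degree := by
    have hc : p.leadingCoeff / q.leadingCoeff ≠ 0 := by simp [hp0, hq0]
    refine degree_sub_lt_left ?_ hp0 ?_
    · rw [degree_mul, degree_C_mul_X_pow _ hc, degree_eq_natDegree hp0, degree_eq_natDegree hq0,
        ← Nat.cast_add, Nat.add_sub_of_le hqp]
    · rw [leadingCoeff_mul, leadingCoeff_C_mul_X_pow, mul_div_cancel₀ _ (by simpa using hq0)]
  obtain ⟨hmod', hdiv'⟩ := mod_and_div hp' hq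
  have hmod : p % q = p' % q := mod_eq_of_dvd_sub (by simp [p'])
  have hdiv : p / q = t + p' / q := by
    refine mul_left_cancel₀ hq0 ?_
    have h := EuclideanDomain.div_add_mod p q
    have h' := EuclideanDomain.div_add_mod p' q
    rw [hmod] at h
    linear_combination h - h'
  exact ⟨hmod ▸ hmod', hdiv ▸ ht.add (by simpa using hdiv')⟩
termination_by p -- `K[X]` is well-founded by degree

end HasExponentResidue

end Polynomial

theorem Polynomial.HasExponentResidue.isArithmetic {M : ℕ} {r : ZMod M} {p : ℝ[X]}
    (hp : HasExponentResidue r p) : IsArithmetic M p := fun e he e' he' ↦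
  (ZMod.natCast_eq_natCast_iff' e e' M).1 ((hp e he).trans (hp e' he').symm)

section GeneralizedEuclid

variable (a : ℕ → ℝ) (n M : ℕ)

theorem hasExponentResidue_geaInit (j : ℕ) :
    HasExponentResidue ((n : ZMod M) - (j : ZMod M)) (geaInit a n M j) := by
  intro e he
  obtain ⟨l, hl, hne⟩ := Finset.exists_ne_zero_of_sum_ne_zero
    (by rwa [mem_support_iff, geaInit, finsetSum_coeff] at he)
  split_ifs at hne with hlj
  · rw [coeff_C_mul_X_pow] at hne
    obtain rfl : e = n - l := by by_contra h; simp [h] at hne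
    rw [Nat.cast_sub (Finset.mem_range_succ_iff.1 hl), ← hlj, ZMod.natCast_mod]
  · simp at hne

theorem hasExponentResidue_gea (i : ℕ) :
    HasExponentResidue ((n : ZMod M) - (i : ZMod M)) (gea a n M i) := by
  induction i using Nat.strong_induction_on with
  | _ i ih =>
    rw [gea]
    split_ifs with hiM hM
    · exact hasExponentResidue_geaInit a n M i
    · have hres : (n : ZMod M) - (i - M : ℕ) = n - i := by
        rw [Nat.cast_sub (not_lt.1 hiM), ZMod.natCast_self, sub_zero]
      exact hres ▸ (ih (i - M) (by omega)).mod_and_div (ih (i - M + 1) (by omega)) |>.1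
    · exact HasExponentResidue.zero

end GeneralizedEuclid

theorem gen_euclid_arithmetic_properties_general
    (n M : ℕ) (a : ℕ → ℝ) (hM : 2 ≤ M) :
    (∀ i ≤ n, gea a n M i ≠ 0 → IsArithmetic M (gea a n M i)) ∧
    (∀ i, i + M ≤ n → gea a n M i ≠ 0 → gea a n M (i + M) ≠ 0 →
      ∀ e ∈ (gea a n M i).support, ∀ e' ∈ (gea a n M (i + M)).support, e % M = e' % M) ∧
    (∀ i ≤ n - M, gea a n M i / gea a n M (i + 1) = 0 ∨
      (IsArithmetic M (gea a n M i / gea a n M (i + 1)) ∧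
        ∀ e ∈ (gea a n M i / gea a n M (i + 1)).support,
          ∀ e' ∈ (gea a n M (i + 1)).support, ∀ e'' ∈ (gea a n M i).support,
            (e + e') % M = e'' % M)) ∧
    (∀ i, i + 1 ≤ n → gea a n M i ≠ 0 → gea a n M (i + 1) ≠ 0 →
      (gea a n M i).degree ≠ (gea a n M (i + 1)).degree) := by
  have hf := hasExponentResidue_gea a n M
  refine ⟨fun i _ _ ↦ (hf i).isArithmetic, ?_, fun i _ ↦ Or.inr ?_, ?_⟩
  · intro i _ _ _ e he e' he'
    rw [← ZMod.natCast_eq_natCast_iff', hf i e he, hf (i + M) e' he', Nat.cast_add,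
      ZMod.natCast_self, add_zero]
  · have hd := ((hf i).mod_and_div (hf (i + 1))).2
    refine ⟨hd.isArithmetic, fun e he e' he' e'' he'' ↦ ?_⟩
    rw [← ZMod.natCast_eq_natCast_iff', Nat.cast_add, hd e he, hf _ e' he', hf i e'' he'']
    ring
  · intro i _ hi hi1 hdeg
    have h := (hf i).natDegree_cast hi
    rw [natDegree_eq_of_degree_eq hdeg, (hf (i + 1)).natDegree_cast hi1, Nat.cast_add,
      sub_right_inj, add_eq_left, ZMod.natCast_eq_zero_iff] at h
    exact absurd (Nat.le_of_dvd one_pos h) (by omega)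

/-- Properties of the generalized Euclidean algorithm with step `M`:
(A) every nonzero `f_i` is arithmetic with difference `M`;
(B) if `f_i` and `f_{i+M}` are both nonzero their residues agree;
(C) each quotient `d_i = f_i / f_{i+1}` is zero or arithmetic, with residue the difference
of the residues of `f_i` and `f_{i+1}`;
(D) nonzero consecutive `f_i`, `f_{i+1}` have distinct degrees. -/
theorem gen_euclid_arithmetic_properties
    (n M : ℕ) (a : ℕ → ℝ) (hn : 2 ≤ n) (ha0 : a 0 ≠ 0) (hM : 2 ≤ M) (hMn : M ≤ n) :
    (∀ i ≤ n, gea a n M i ≠ 0 → IsArithmetic M (gea a n M i)) ∧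
    (∀ i, i + M ≤ n → gea a n M i ≠ 0 → gea a n M (i + M) ≠ 0 →
      ∀ e ∈ (gea a n M i).support, ∀ e' ∈ (gea a n M (i + M)).support, e % M = e' % M) ∧
    (∀ i ≤ n - M, gea a n M i / gea a n M (i + 1) = 0 ∨
      (IsArithmetic M (gea a n M i / gea a n M (i + 1)) ∧
        ∀ e ∈ (gea a n M i / gea a n M (i + 1)).support,
          ∀ e' ∈ (gea a n M (i + 1)).support, ∀ e'' ∈ (gea a n M i).support,
            (e + e') % M = e'' % M)) ∧
    (∀ i, i + 1 ≤ n → gea a n M i ≠ 0 → gea a n M (i + 1) ≠ 0 →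
      (gea a n M i).degree ≠ (gea a n M (i + 1)).degree) :=
  gen_euclid_arithmetic_properties_general n M a hM
end

section
/- Let f(x) = a_0 x^n + ... + a_n be a real polynomial of degree n with a_0 > 0 and let 2 ≤ M ≤ n. Suppose that all n special minors Δ_p, p = 1, ..., n, of the generalized Hurwitz matrix H_M(f) are strictly positive. Then: (a) H_M(f) is totally nonnegative; (b) all the coefficients a_0, a_1, ..., a_n of f are strictly positive; (c) a minor of H_M(f) on rows i_1 < ... < i_p and columns j_1 < ... < j_p is strictly positive if and only if all of its diagonal entries a_{M j_l − i_l}, l = 1, ..., p, are strictly positive. -/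
open Polynomial

/-- Entry `(i,j)` (0-based) of the generalized Hurwitz matrix `H_M(f) = (a_{Mj-i})_{i,j≥1}`,
with `a_k := 0` for `k < 0` and `k > n`. -/
def hEntry (a : ℕ → ℝ) (n M : ℕ) (i j : ℕ) : ℝ :=
  if i + 1 ≤ M * (j + 1) ∧ M * (j + 1) - (i + 1) ≤ n then a (M * (j + 1) - (i + 1)) else 0

/-- Total nonnegativity of an infinite matrix: every minor is nonnegative. -/
def IsTotallyNonneg (A : ℕ → ℕ → ℝ) : Prop :=
  ∀ (p : ℕ) (r c : Fin p → ℕ), StrictMono r → StrictMono c →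
    0 ≤ Matrix.det (Matrix.of fun s t : Fin p => A (r s) (c t))

/-- The special minor `H_M(k,r)` on rows `k, k+1, ..., k+r-1` and columns `1, ..., r`
(1-based indexing). -/
noncomputable def specialMinor (a : ℕ → ℝ) (n M k r : ℕ) : ℝ :=
  Matrix.det (Matrix.of fun s t : Fin r => hEntry a n M (k - 1 + s) t)

/-!
Induction on the degree through one step of a generalized Euclidean algorithm. For `c = a₀/a₁`
the coefficients `b_k = a_{k+1} - [M ∣ k+1] c a_{k+2}` of a polynomial of degree one less satisfy
`H_M(a) = L · H_M(b)`, where `L` is bidiagonal with `L_{i,i+1} = 1` and `L_{i,i} = [M ∣ i+1] c ≥ 0`.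
Expanding the minors of `H_M(a)` row by row through `L` (Cauchy–Binet for a bidiagonal factor)
carries total nonnegativity and "positive diagonal implies positive minor" from `b` over to `a`,
and `a_q = b_{q-1} + [M ∣ q] c b_q` does the same for positivity of the coefficients.
On the consecutive rows of a special minor the relevant block of `L` is unitriangular, so
`Δ_a(k, r) = Δ_b(k+1, r)` for `M ∤ k`; and `Δ_b(M, r+1) = b₀ Δ_b(1, r)`, because `H_M` is
invariant under shifting by `M` rows and one column. Hence the special minors of `b` are again
positive. In degree `0` every minor is the product of its diagonal. Conversely, a vanishing
diagonal entry `a_{Mj_l - i_l}` has `Mj_l - i_l < 0` or `> n`; as `Mj - i` is monotone, the minor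
then contains a zero block of rows `≥ l` and columns `≤ l` (or the reverse), so it vanishes.
-/

open Matrix Finset

theorem Equiv.Perm.exists_lt_apply_lt_of_ne_one {p : ℕ} {σ : Equiv.Perm (Fin p)}
    (hσ : σ ≠ 1) : ∃ s t, s < t ∧ σ t < σ s := by
  by_contra! h
  have hid : ⇑σ = id :=
    StrictMono.eq_id fun s t hst => (h s t hst).lt_of_ne (σ.injective.ne hst.ne)
  exact hσ (Equiv.ext fun x => congrFun hid x)

namespace Matrix

variable {R : Type*} [CommRing R] {p : ℕ}

theorem det_eq_prod_diag_of_support_monotone (A : Matrix (Fin p) (Fin p) R)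
    (h : ∀ s t s' t', s < s' → t' < t → A s t ≠ 0 → A s' t' = 0) :
    A.det = ∏ s, A s s := by
  rw [det_apply, sum_eq_single 1 ?_ (by simp)]
  · simp
  intro σ _ hσ
  obtain ⟨s, t, hst, hσts⟩ := σ.exists_lt_apply_lt_of_ne_one hσ
  suffices ∏ i, A (σ i) i = 0 by simp [this]
  by_cases ht : A (σ t) t = 0
  · exact prod_eq_zero (mem_univ t) ht
  · exact prod_eq_zero (mem_univ s) (h _ _ _ _ hσts hst ht)

theorem det_eq_zero_of_upper_right_eq_zero (A : Matrix (Fin p) (Fin p) R) (l : Fin p)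
    (h : ∀ s t, s ≤ l → l ≤ t → A s t = 0) : A.det = 0 := by
  rw [det_apply]
  refine sum_eq_zero fun σ _ => ?_
  obtain ⟨t, hlt, hσt⟩ : ∃ t, l ≤ t ∧ σ t ≤ l := by
    by_contra! hc
    have hmaps : Set.MapsTo σ (Ici l) (Ioi l) := fun x hx => by
      simpa using hc x (by simpa using hx)
    have := card_le_card_of_injOn σ hmaps σ.injective.injOn
    rw [Fin.card_Ici, Fin.card_Ioi] at this
    omega
  have hzero : ∏ i, A (σ i) i = 0 := prod_eq_zero (mem_univ t) (h _ _ hσt hlt)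
  simp [hzero]

end Matrix

def minor {p : ℕ} (A : ℕ → ℕ → ℝ) (rows cols : Fin p → ℕ) : ℝ :=
  (of fun s t => A (rows s) (cols t)).det

theorem IsTotallyNonneg.minor_nonneg_of_monotone {B : ℕ → ℕ → ℝ} (hB : IsTotallyNonneg B)
    {p : ℕ} {rows cols : Fin p → ℕ} (hrows : Monotone rows) (hcols : StrictMono cols) :
    0 ≤ minor B rows cols := by
  by_cases hinj : Function.Injective rows
  · exact hB p rows cols (hrows.strictMono_of_injective hinj) hcols
  · obtain ⟨s, s', hss', hne⟩ := Function.not_injective_iff.mp hinj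
    exact (det_zero_of_row_eq hne (funext fun t => by simp [hss'])).ge

theorem StrictMono.monotone_ite_add_one {p : ℕ} {rows : Fin p → ℕ} (hrows : StrictMono rows)
    (ε : Fin p → Bool) : Monotone fun s => if ε s then rows s else rows s + 1 := by
  intro s s' hss'
  rcases hss'.lt_or_eq with hlt | rfl
  · have := hrows hlt
    dsimp only
    split_ifs <;> omega
  · exact le_rfl

section BidiagonalFactor

variable {A B : ℕ → ℕ → ℝ} {w : ℕ → ℝ}

theorem weighted_minor_ite_add_one_nonneg (hw : ∀ i, 0 ≤ w i) (hB : IsTotallyNonneg B)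
    {p : ℕ} {rows cols : Fin p → ℕ} (hrows : StrictMono rows) (hcols : StrictMono cols)
    (ε : Fin p → Bool) :
    0 ≤ (∏ s, if ε s then w (rows s) else 1) *
      minor B (fun s => if ε s then rows s else rows s + 1) cols :=
  mul_nonneg (prod_nonneg fun s _ => by split_ifs <;> simp [hw])
    (hB.minor_nonneg_of_monotone (hrows.monotone_ite_add_one ε) hcols)

variable (hAB : ∀ i j, A i j = B (i + 1) j + w i * B i j)
include hAB

theorem minor_eq_sum_of_eq_add_mul {p : ℕ} (rows cols : Fin p → ℕ) :
    minor A rows cols = ∑ ε : Fin p → Bool, (∏ s, if ε s then w (rows s) else 1) *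
      minor B (fun s => if ε s then rows s else rows s + 1) cols := by
  set g : Fin p → Bool → Fin p → ℝ := fun s e =>
    (if e then w (rows s) else 1) • fun t => B (if e then rows s else rows s + 1) (cols t)
  have hA : (of fun s t => A (rows s) (cols t)) = fun s => ∑ e, g s e := by
    ext s t
    simp [g, hAB, add_comm]
  change detRowAlternating.toMultilinearMap (of fun s t => A (rows s) (cols t)) = _
  rw [hA, MultilinearMap.map_sum]
  refine sum_congr rfl fun ε _ => ?_
  rw [MultilinearMap.map_smul_univ, smul_eq_mul]
  rfl

theorem IsTotallyNonneg.of_eq_add_mul (hw : ∀ i, 0 ≤ w i) (hB : IsTotallyNonneg B) :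
    IsTotallyNonneg A := fun _ rows cols hrows hcols => by
  rw [← minor, minor_eq_sum_of_eq_add_mul hAB]
  exact sum_nonneg fun ε _ => weighted_minor_ite_add_one_nonneg hw hB hrows hcols ε

theorem minor_pos_of_eq_add_mul (hw : ∀ i, 0 ≤ w i) (hB : IsTotallyNonneg B) {p : ℕ}
    {rows cols : Fin p → ℕ} (hrows : StrictMono rows) (hcols : StrictMono cols)
    (f : Fin p → ℕ) (hf : ∀ s, f s = rows s + 1 ∨ f s = rows s ∧ 0 < w (rows s))
    (hpos : 0 < minor B f cols) : 0 < minor A rows cols := by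
  set ε : Fin p → Bool := fun s => decide (f s = rows s)
  have hε : (fun s => if ε s then rows s else rows s + 1) = f := by
    ext s
    rcases hf s with h | h <;> simp [ε, h]
  rw [minor_eq_sum_of_eq_add_mul hAB]
  refine sum_pos' (fun ε _ => weighted_minor_ite_add_one_nonneg hw hB hrows hcols ε)
    ⟨ε, mem_univ _, mul_pos (prod_pos fun s _ => ?_) (hε ▸ hpos)⟩
  rcases hf s with h | h <;> simp [ε, h]

theorem minor_consecutive_of_eq_add_mul {k : ℕ} (hk : w k = 0) {r : ℕ} (cols : Fin r → ℕ) :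
    minor A (fun s => k + s) cols = minor B (fun s => k + 1 + s) cols := by
  let L : Matrix (Fin r) (Fin r) ℝ :=
    of fun s u => if u = s then 1 else if u.val + 1 = s then w (k + s) else 0
  have hL : L.det = 1 := by
    rw [det_of_isLowerTriangular L fun s u (hsu : s < u) => ?_]
    · simp [L]
    · simp [L, hsu.ne', show (u : ℕ) + 1 ≠ s by omega]
  have hmul : (of fun (s t : Fin r) => A (k + s) (cols t)) =
      L * of fun (s t : Fin r) => B (k + 1 + s) (cols t) := by
    ext s t
    have hsplit : ∀ u, L s u * B (k + 1 + u) (cols t) =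
        (if u = s then B (k + 1 + u) (cols t) else 0) +
          if u.val + 1 = s then w (k + s) * B (k + 1 + u) (cols t) else 0 := by
      intro u
      by_cases hus : u = s <;> simp [L, hus]
    simp only [of_apply, mul_apply]
    rw [hAB, sum_congr rfl fun u _ => hsplit u, sum_add_distrib, sum_ite_eq',
      if_pos (mem_univ _), add_right_comm k]
    congr 1
    by_cases hs : (s : ℕ) = 0
    · rw [sum_eq_zero fun u _ => if_neg (by omega), hs, add_zero, hk, zero_mul]
    · rw [sum_eq_single ⟨s - 1, by omega⟩
        (fun u _ hu => if_neg fun h => hu (Fin.ext (by dsimp only; omega))) (by simp),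
        if_pos (by dsimp only; omega)]
      congr 2
      dsimp only
      omega
  rw [minor, minor, hmul, det_mul, hL, one_mul]

end BidiagonalFactor

/-- Indexed by `ℤ` so that `a_{Mj-i}` needs no truncated subtraction (`hEntry_eq_extCoeff`). -/
def extCoeff (a : ℕ → ℝ) (n : ℕ) (q : ℤ) : ℝ :=
  if 0 ≤ q ∧ q ≤ n then a q.toNat else 0

section ExtCoeff

variable {a : ℕ → ℝ} {n : ℕ}

theorem extCoeff_natCast {p : ℕ} (hp : p ≤ n) : extCoeff a n p = a p := by
  simp [extCoeff, hp]

theorem extCoeff_eq_zero {q : ℤ} (hq : q < 0 ∨ n < q) : extCoeff a n q = 0 :=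
  if_neg (by omega)

theorem extCoeff_nonneg (ha : ∀ p ≤ n, 0 ≤ a p) (q : ℤ) : 0 ≤ extCoeff a n q := by
  unfold extCoeff
  split_ifs with hq
  · exact ha _ (by omega)
  · exact le_rfl

theorem extCoeff_pos_iff (ha : ∀ p ≤ n, 0 < a p) {q : ℤ} :
    0 < extCoeff a n q ↔ 0 ≤ q ∧ q ≤ n := by
  unfold extCoeff
  split_ifs with hq
  · exact iff_of_true (ha _ (by omega)) hq
  · exact iff_of_false (lt_irrefl 0) hq

end ExtCoeff

theorem hEntry_eq_extCoeff (a : ℕ → ℝ) (n M i j : ℕ) :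
    hEntry a n M i j = extCoeff a n (M * (j + 1) - (i + 1)) := by
  have hcast : (M : ℤ) * (j + 1) - (i + 1) = ((M * (j + 1) : ℕ) : ℤ) - (i + 1 : ℕ) := by
    push_cast; ring
  rw [hEntry, hcast]
  generalize M * (j + 1) = J
  split_ifs with h
  · rw [show (J : ℤ) - (i + 1 : ℕ) = (J - (i + 1) : ℕ) by omega, extCoeff_natCast h.2]
  · exact (extCoeff_eq_zero (by omega)).symm

theorem hEntry_add_succ (a : ℕ → ℝ) (n M i j : ℕ) :
    hEntry a n M (i + M) (j + 1) = hEntry a n M i j := by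
  simp only [hEntry_eq_extCoeff]
  congr 1
  push_cast
  ring

/-- The coefficients `b_k = a_{k+1} - [M ∣ k+1] (a₀/a₁) a_{k+2}` of the Euclidean step, chosen so
that row `i` of `H_M(a)` is row `i+1` plus `euclidWeight M a i` times row `i` of `H_M(b)`. -/
noncomputable def euclidStep (M n : ℕ) (a : ℕ → ℝ) (k : ℕ) : ℝ :=
  extCoeff a (n + 1) (k + 1) -
    (if (M : ℤ) ∣ k + 1 then a 0 / a 1 else 0) * extCoeff a (n + 1) (k + 2)

noncomputable def euclidWeight (M : ℕ) (a : ℕ → ℝ) (i : ℕ) : ℝ :=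
  if M ∣ i + 1 then a 0 / a 1 else 0

section EuclidStep

variable {M n : ℕ} {a : ℕ → ℝ}

theorem Int.not_dvd_add_one_of_dvd (hM : 2 ≤ M) {q : ℤ} (h : (M : ℤ) ∣ q) :
    ¬(M : ℤ) ∣ q + 1 := fun h' => by
  have := Int.le_of_dvd one_pos ((Int.dvd_add_right h).mp h')
  omega

theorem Int.natCast_not_dvd_one (hM : 2 ≤ M) : ¬(M : ℤ) ∣ 1 := by
  simpa using Int.not_dvd_add_one_of_dvd hM (dvd_zero _)

theorem euclidWeight_nonneg (ha0 : 0 ≤ a 0) (ha1 : 0 ≤ a 1) (i : ℕ) :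
    0 ≤ euclidWeight M a i := by
  unfold euclidWeight
  split_ifs
  exacts [div_nonneg ha0 ha1, le_rfl]

theorem euclidStep_zero (hM : 2 ≤ M) : euclidStep M n a 0 = a 1 := by
  simp [euclidStep, Int.natCast_not_dvd_one hM, extCoeff]

theorem extCoeff_euclidStep (hM : 2 ≤ M) (ha1 : a 1 ≠ 0) (q : ℤ) :
    extCoeff (euclidStep M n a) n q = extCoeff a (n + 1) (q + 1) -
      (if (M : ℤ) ∣ q + 1 then a 0 / a 1 else 0) * extCoeff a (n + 1) (q + 2) := by
  by_cases hq : 0 ≤ q ∧ q ≤ n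
  · obtain ⟨k, rfl⟩ := Int.eq_ofNat_of_zero_le hq.1
    rw [extCoeff_natCast (by omega)]
    rfl
  rw [extCoeff_eq_zero (by omega)]
  obtain hq | rfl | rfl | hq : n < q ∨ q = -1 ∨ q = -2 ∨ q < -2 := by omega
  · rw [extCoeff_eq_zero (q := q + 1) (by omega), extCoeff_eq_zero (q := q + 2) (by omega)]
    ring
  · rw [show (-1 : ℤ) + 1 = (0 : ℕ) by norm_num, show (-1 : ℤ) + 2 = (1 : ℕ) by norm_num,
      extCoeff_natCast (Nat.zero_le _), extCoeff_natCast (by omega)]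
    simp [ha1]
  · simp [extCoeff_eq_zero (a := a) (n := n + 1) (q := -1) (by omega),
      Int.natCast_not_dvd_one hM]
  · rw [extCoeff_eq_zero (q := q + 1) (by omega), extCoeff_eq_zero (q := q + 2) (by omega)]
    ring

theorem extCoeff_eq_euclidStep (hM : 2 ≤ M) (ha1 : a 1 ≠ 0) (q : ℤ) :
    extCoeff a (n + 1) q = extCoeff (euclidStep M n a) n (q - 1) +
      (if (M : ℤ) ∣ q then a 0 / a 1 else 0) * extCoeff (euclidStep M n a) n q := by
  rw [extCoeff_euclidStep hM ha1, extCoeff_euclidStep hM ha1, sub_add_cancel,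
    show q - 1 + 2 = q + 1 by ring]
  split_ifs with h h'
  · exact absurd h' (Int.not_dvd_add_one_of_dvd hM h)
  all_goals ring

theorem hEntry_eq_euclidStep (hM : 2 ≤ M) (ha1 : a 1 ≠ 0) (i j : ℕ) :
    hEntry a (n + 1) M i j = hEntry (euclidStep M n a) n M (i + 1) j +
      euclidWeight M a i * hEntry (euclidStep M n a) n M i j := by
  have hdvd : (M : ℤ) ∣ M * (j + 1) - (i + 1) ↔ M ∣ i + 1 := by
    rw [dvd_sub_right (dvd_mul_right _ _)]
    norm_cast
  simp only [hEntry_eq_extCoeff, extCoeff_eq_euclidStep hM ha1, euclidWeight, hdvd]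
  push_cast
  rw [sub_sub]

theorem specialMinor_eq_minor (a : ℕ → ℝ) (n M k r : ℕ) :
    specialMinor a n M k r = minor (hEntry a n M) (fun s : Fin r => k - 1 + s) (↑) :=
  rfl

theorem specialMinor_euclidStep (hM : 2 ≤ M) (ha1 : a 1 ≠ 0) {k : ℕ} (hk : ¬M ∣ k) (r : ℕ) :
    specialMinor a (n + 1) M k r = specialMinor (euclidStep M n a) n M (k + 1) r := by
  have hk1 : 1 ≤ k := Nat.one_le_iff_ne_zero.mpr fun hk0 => hk (hk0 ▸ dvd_zero M)
  have hw : euclidWeight M a (k - 1) = 0 := by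
    simp [euclidWeight, Nat.sub_add_cancel hk1, hk]
  rw [specialMinor_eq_minor, specialMinor_eq_minor,
    minor_consecutive_of_eq_add_mul (hEntry_eq_euclidStep hM ha1) hw, Nat.add_sub_cancel,
    Nat.sub_add_cancel hk1]

theorem specialMinor_self_succ (hM : 1 ≤ M) (b : ℕ → ℝ) (n r : ℕ) :
    specialMinor b n M M (r + 1) = b 0 * specialMinor b n M 1 r := by
  have hcol : ∀ i : ℕ, hEntry b n M (M - 1 + i) 0 = if i = 0 then b 0 else 0 := by
    intro i
    rw [hEntry_eq_extCoeff]
    split_ifs with hi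
    · rw [hi, show (M : ℤ) * ((0 : ℕ) + 1) - ((M - 1 + 0 : ℕ) + 1) = (0 : ℕ) by push_cast; omega,
        extCoeff_natCast (Nat.zero_le n)]
    · exact extCoeff_eq_zero (by push_cast; omega)
  rw [specialMinor, det_succ_column_zero, sum_eq_single 0 (fun i _ hi => ?_) (by simp)]
  · simp only [of_apply, Fin.val_zero, hcol, if_true, pow_zero, one_mul, Fin.succAbove_zero,
      specialMinor]
    congr 2
    ext s t
    simp only [submatrix_apply, of_apply, Fin.val_succ]
    rw [show M - 1 + ((s : ℕ) + 1) = 1 - 1 + s + M by omega, hEntry_add_succ]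
  · simp [hcol, Fin.val_ne_zero_iff.mpr hi]

theorem specialMinor_pred_one (hM : 2 ≤ M) (hn : 1 ≤ n) :
    specialMinor a n M (M - 1) 1 = a 1 := by
  rw [specialMinor, det_fin_one, of_apply, hEntry_eq_extCoeff]
  convert extCoeff_natCast (a := a) hn using 2
  simp only [Fin.val_eq_zero, Nat.cast_zero, Nat.cast_one]
  omega

end EuclidStep

def SpecialMinorsPos (a : ℕ → ℝ) (n M : ℕ) : Prop :=
  ∀ k r : ℕ, 1 ≤ k → k ≤ M - 1 → 1 ≤ r →
    (M - 1) * (r - 1) + (M - k) ≤ n → 0 < specialMinor a n M k r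

def PosMinorOfPosDiag (A : ℕ → ℕ → ℝ) : Prop :=
  ∀ (p : ℕ) (rows cols : Fin p → ℕ), StrictMono rows → StrictMono cols →
    (∀ l, 0 < A (rows l) (cols l)) → 0 < minor A rows cols

section Induction

variable {M n : ℕ} {a : ℕ → ℝ}

theorem SpecialMinorsPos.one_pos (hM : 2 ≤ M) (h : SpecialMinorsPos a (n + 1) M) : 0 < a 1 := by
  have := h (M - 1) 1 (by omega) le_rfl le_rfl (by simp only [tsub_self, mul_zero]; omega)
  rwa [specialMinor_pred_one hM (by omega)] at this

theorem SpecialMinorsPos.euclidStep (hM : 2 ≤ M) (h : SpecialMinorsPos a (n + 1) M) :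
    SpecialMinorsPos (euclidStep M n a) n M := by
  have ha1 := h.one_pos hM
  intro k r hk1 hkM hr hkr
  rcases hk1.eq_or_lt with rfl | hk1
  · have hMr : (M - 1) * (r + 1 - 1) = (M - 1) * (r - 1) + (M - 1) := by
      rw [← Nat.mul_add_one, Nat.add_sub_cancel, Nat.sub_add_cancel hr]
    have hpos := h (M - 1) (r + 1) (by omega) le_rfl (by omega) (by omega)
    rw [specialMinor_euclidStep hM ha1.ne' (Nat.not_dvd_of_pos_of_lt (by omega) (by omega)),
      Nat.sub_add_cancel (by omega), specialMinor_self_succ (by omega), euclidStep_zero hM]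
      at hpos
    exact pos_of_mul_pos_right hpos ha1.le
  · have hpos := h (k - 1) r (by omega) (by omega) hr (by omega)
    rwa [specialMinor_euclidStep hM ha1.ne' (Nat.not_dvd_of_pos_of_lt (by omega) (by omega)),
      Nat.sub_add_cancel (by omega)] at hpos

theorem eq_mul_of_hEntry_zero_ne_zero {i j : ℕ} (h : hEntry a 0 M i j ≠ 0) :
    i + 1 = M * (j + 1) := by
  by_contra hne
  have hne' : (i : ℤ) + 1 ≠ M * (j + 1) := by exact_mod_cast hne
  exact h (by rw [hEntry_eq_extCoeff]; exact extCoeff_eq_zero (by omega))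

theorem minor_hEntry_zero_eq_prod {p : ℕ} {rows cols : Fin p → ℕ} (hrows : StrictMono rows)
    (hcols : StrictMono cols) :
    minor (hEntry a 0 M) rows cols = ∏ l, hEntry a 0 M (rows l) (cols l) := by
  refine det_eq_prod_diag_of_support_monotone _ fun s t s' t' hss' htt' hst => ?_
  by_contra hst'
  have h := eq_mul_of_hEntry_zero_ne_zero hst
  have h' := eq_mul_of_hEntry_zero_ne_zero hst'
  have := Nat.mul_le_mul_left M (Nat.add_le_add_right (hcols htt').le 1)
  have := hrows hss'
  omega

theorem isTotallyNonneg_hEntry_zero (ha0 : 0 ≤ a 0) : IsTotallyNonneg (hEntry a 0 M) :=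
  fun _ _ _ hrows hcols => by
    rw [← minor, minor_hEntry_zero_eq_prod hrows hcols]
    refine prod_nonneg fun l _ => ?_
    rw [hEntry_eq_extCoeff]
    exact extCoeff_nonneg (fun p hp => by rwa [Nat.le_zero.mp hp]) _

theorem posMinorOfPosDiag_hEntry_zero : PosMinorOfPosDiag (hEntry a 0 M) :=
  fun _ _ _ hrows hcols hdiag => by
    rw [minor_hEntry_zero_eq_prod hrows hcols]
    exact prod_pos fun l _ => hdiag l

theorem isTotallyNonneg_hEntry_succ (hM : 2 ≤ M) (ha0 : 0 ≤ a 0) (ha1 : 0 < a 1)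
    (h : IsTotallyNonneg (hEntry (euclidStep M n a) n M)) :
    IsTotallyNonneg (hEntry a (n + 1) M) :=
  .of_eq_add_mul (hEntry_eq_euclidStep hM ha1.ne') (euclidWeight_nonneg ha0 ha1.le) h

theorem pos_of_euclidStep_pos (hM : 2 ≤ M) (ha0 : 0 < a 0) (ha1 : 0 < a 1)
    (hb : ∀ p ≤ n, 0 < euclidStep M n a p) : ∀ p ≤ n + 1, 0 < a p := by
  rintro (_ | p) hp
  · exact ha0
  have hrec := extCoeff_eq_euclidStep (n := n) hM ha1.ne' (p + 1 : ℕ)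
  rw [extCoeff_natCast hp, show ((p + 1 : ℕ) : ℤ) - 1 = p by push_cast; ring,
    extCoeff_natCast (by omega)] at hrec
  rw [hrec]
  refine add_pos_of_pos_of_nonneg (hb p (by omega)) (mul_nonneg ?_ ?_)
  · split_ifs
    exacts [div_nonneg ha0.le ha1.le, le_rfl]
  · exact extCoeff_nonneg (fun q hq => (hb q hq).le) _

theorem posMinorOfPosDiag_hEntry_succ (hM : 2 ≤ M) (ha0 : 0 < a 0) (ha1 : 0 < a 1)
    (hTNN : IsTotallyNonneg (hEntry (euclidStep M n a) n M))
    (hb : ∀ p ≤ n, 0 < euclidStep M n a p)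
    (hdiag : PosMinorOfPosDiag (hEntry (euclidStep M n a) n M)) :
    PosMinorOfPosDiag (hEntry a (n + 1) M) := by
  intro p rows cols hrows hcols hpos
  set q : Fin p → ℤ := fun l => M * (cols l + 1) - (rows l + 1)
  have hq : ∀ l, 0 ≤ q l ∧ q l ≤ n + 1 := fun l => by
    have := hpos l
    rwa [hEntry_eq_extCoeff, extCoeff_pos_iff (pos_of_euclidStep_pos hM ha0 ha1 hb)] at this
  -- In row `l` take the row of `H_M(b)` whose entry in column `cols l` has a positive
  -- coefficient: `b₀ = a₁` when the diagonal entry is `a₀`, and `b_{q l - 1}` otherwise.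
  set f : Fin p → ℕ := fun l => if q l = 0 then rows l else rows l + 1
  refine minor_pos_of_eq_add_mul (hEntry_eq_euclidStep hM ha1.ne')
    (euclidWeight_nonneg ha0.le ha1.le) hTNN hrows hcols f (fun l => ?_)
    (hdiag p f cols (fun s s' hss' => ?_) hcols fun l => ?_)
  · by_cases hl : q l = 0
    · have hdvd : M ∣ rows l + 1 := ⟨cols l + 1, by zify; simp only [q] at hl; linarith⟩
      exact .inr ⟨if_pos hl, by simp [euclidWeight, hdvd, div_pos ha0 ha1]⟩
    · exact .inl (if_neg hl)
  · have := hrows hss'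
    have : (M : ℤ) * (cols s + 1) + M ≤ M * (cols s' + 1) := by
      have : (cols s : ℤ) + 1 ≤ cols s' := by exact_mod_cast hcols hss'
      nlinarith
    have hs := hq s
    have hs' := hq s'
    simp only [f, q] at hs hs' ⊢
    split_ifs <;> omega
  · rw [hEntry_eq_extCoeff, extCoeff_pos_iff hb]
    have hl := hq l
    simp only [f, q] at hl ⊢
    split_ifs <;> omega

theorem SpecialMinorsPos.isTotallyNonneg_and_pos (hM : 2 ≤ M) (ha0 : 0 < a 0)
    (hΔ : SpecialMinorsPos a n M) :
    IsTotallyNonneg (hEntry a n M) ∧ (∀ p ≤ n, 0 < a p) ∧ PosMinorOfPosDiag (hEntry a n M) := by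
  induction n generalizing a with
  | zero =>
    exact ⟨isTotallyNonneg_hEntry_zero ha0.le, fun p hp => by rwa [Nat.le_zero.mp hp],
      posMinorOfPosDiag_hEntry_zero⟩
  | succ n ih =>
    have ha1 := hΔ.one_pos hM
    obtain ⟨hTNN, hb, hdiag⟩ := ih (by rwa [euclidStep_zero hM]) (hΔ.euclidStep hM)
    exact ⟨isTotallyNonneg_hEntry_succ hM ha0.le ha1 hTNN, pos_of_euclidStep_pos hM ha0 ha1 hb,
      posMinorOfPosDiag_hEntry_succ hM ha0 ha1 hTNN hb hdiag⟩

end Induction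

theorem hEntry_pos_of_minor_pos {a : ℕ → ℝ} {n M p : ℕ} (ha : ∀ p ≤ n, 0 < a p)
    {rows cols : Fin p → ℕ} (hrows : StrictMono rows) (hcols : StrictMono cols)
    (hpos : 0 < minor (hEntry a n M) rows cols) (l : Fin p) :
    0 < hEntry a n M (rows l) (cols l) := by
  set q : ℕ → ℕ → ℤ := fun i j => M * (j + 1) - (i + 1)
  have hq_anti : ∀ {i i' j j' : ℕ}, i ≤ i' → j' ≤ j → q i' j' ≤ q i j := by
    intro i i' j j' hi hj
    have : (M : ℤ) * (j' + 1) ≤ M * (j + 1) := by gcongr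
    simp only [q]
    omega
  rw [hEntry_eq_extCoeff, extCoeff_pos_iff ha]
  by_contra hdiag
  refine hpos.ne' ?_
  rcases not_and_or.mp hdiag with hneg | hbig
  · rw [minor, ← det_transpose]
    refine det_eq_zero_of_upper_right_eq_zero _ l fun s t hs ht => ?_
    rw [transpose_apply, of_apply, hEntry_eq_extCoeff]
    have := hq_anti (hrows.monotone ht) (hcols.monotone hs)
    exact extCoeff_eq_zero (.inl (by simp only [q] at this; omega))
  · refine det_eq_zero_of_upper_right_eq_zero _ l fun s t hs ht => ?_
    rw [of_apply, hEntry_eq_extCoeff]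
    have := hq_anti (hrows.monotone hs) (hcols.monotone ht)
    exact extCoeff_eq_zero (.inr (by simp only [q] at this; omega))

theorem goldman_sun_special_minors_general
    (n M : ℕ) (a : ℕ → ℝ) (ha0 : 0 < a 0) (hM : 2 ≤ M)
    (hdelta : ∀ k r : ℕ, 1 ≤ k → k ≤ M - 1 → 1 ≤ r →
      (M - 1) * (r - 1) + (M - k) ≤ n → 0 < specialMinor a n M k r) :
    IsTotallyNonneg (hEntry a n M) ∧
    (∀ p ≤ n, 0 < a p) ∧
    (∀ (p : ℕ) (rows cols : Fin p → ℕ), StrictMono rows → StrictMono cols →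
      (0 < Matrix.det (Matrix.of fun s t : Fin p => hEntry a n M (rows s) (cols t)) ↔
        ∀ l : Fin p, 0 < hEntry a n M (rows l) (cols l))) := by
  obtain ⟨hTNN, hcoeff, hdiag⟩ := SpecialMinorsPos.isTotallyNonneg_and_pos hM ha0 hdelta
  exact ⟨hTNN, hcoeff, fun p rows cols hrows hcols =>
    ⟨hEntry_pos_of_minor_pos hcoeff hrows hcols, hdiag p rows cols hrows hcols⟩⟩

/-- Goldman–Sun: if all `n` special minors `Δ_p = H_M(k,r)`, `p = (M-1)(r-1)+(M-k)`,
`p = 1, ..., n`, of the generalized Hurwitz matrix are positive, then (a) `H_M(f)` is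
totally nonnegative, (b) all coefficients of `f` are positive, and (c) a minor of `H_M(f)`
is positive iff all its diagonal entries are positive. -/
theorem goldman_sun_special_minors
    (n M : ℕ) (a : ℕ → ℝ) (ha0 : 0 < a 0) (hM : 2 ≤ M) (hMn : M ≤ n)
    (hdelta : ∀ k r : ℕ, 1 ≤ k → k ≤ M - 1 → 1 ≤ r →
      (M - 1) * (r - 1) + (M - k) ≤ n → 0 < specialMinor a n M k r) :
    IsTotallyNonneg (hEntry a n M) ∧
    (∀ p ≤ n, 0 < a p) ∧
    (∀ (p : ℕ) (rows cols : Fin p → ℕ), StrictMono rows → StrictMono cols →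
      (0 < Matrix.det (Matrix.of fun s t : Fin p => hEntry a n M (rows s) (cols t)) ↔
        ∀ l : Fin p, 0 < hEntry a n M (rows l) (cols l))) :=
  goldman_sun_special_minors_general n M a ha0 hM hdelta
end
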